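/- Let K be a number field, let d_K = [K:ℚ] be its degree, and let D_K be the absolute value of the discriminant of K over ℚ. Then the class number of K satisfies |Pic(O_K)| ≤ (d_K + D_K)^{d_K}. -/

import Mathlib

/-!
Minkowski's bound puts an integral ideal of norm at most `√D_K` in every ideal class, since
`(4/π)^s d!/d^d ≤ 1`. An ideal of norm `n` divides `(n)`, and a nonzero ideal `J` has at most
`2^(number of prime factors of J) ≤ N(J)` divisors, so there are at most `N((n)) = n^d` ideals of
norm `n`. Summing over `n ≤ M := ⌊√D_K⌋` bounds the class number by `M^(d+1) ≤ D_K^d`.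
-/

open NumberField

open scoped nonZeroDivisors

open Nat in
theorem Nat.two_pow_div_two_mul_factorial_le_pow (n : ℕ) : 2 ^ (n / 2) * n ! ≤ n ^ n := by
  have even_case (m : ℕ) : 2 ^ m * (2 * m)! ≤ (2 * m) ^ (2 * m) :=
    calc 2 ^ m * (2 * m)! ≤ 2 ^ m * ((2 * m) ^ m * m !) := by gcongr; exact factorial_two_mul_le m
      _ ≤ 2 ^ m * ((2 * m) ^ m * m ^ m) := by gcongr; exact factorial_le_pow m
      _ = (2 * m) ^ (2 * m) := by ring
  obtain ⟨m, rfl | rfl⟩ := n.even_or_odd'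
  · simpa using even_case m
  · calc 2 ^ ((2 * m + 1) / 2) * (2 * m + 1)! = (2 * m + 1) * (2 ^ m * (2 * m)!) := by
          rw [factorial_succ, show (2 * m + 1) / 2 = m by omega]; ring
      _ ≤ (2 * m + 1) * (2 * m + 1) ^ (2 * m) := by
          gcongr; exact (even_case m).trans (by gcongr; omega)
      _ = (2 * m + 1) ^ (2 * m + 1) := by ring

open Real in
theorem four_div_pi_pow_mul_factorial_le_pow {s d : ℕ} (h : 2 * s ≤ d) :
    (4 / π) ^ s * d.factorial ≤ (d : ℝ) ^ d :=
  calc (4 / π) ^ s * d.factorial ≤ 2 ^ (d / 2) * d.factorial := by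
        gcongr
        calc (4 / π) ^ s ≤ 2 ^ s := by
              gcongr
              rw [div_le_iff₀ pi_pos]
              linarith [pi_gt_three]
          _ ≤ 2 ^ (d / 2) := pow_le_pow_right₀ one_le_two (by omega)
    _ ≤ (d : ℝ) ^ d := mod_cast d.two_pow_div_two_mul_factorial_le_pow

namespace Ideal

open UniqueFactorizationMonoid

variable {S : Type*} [CommRing S] [IsDedekindDomain S] [Module.Free ℤ S] [Module.Finite ℤ S]

theorem two_le_absNorm_of_prime {P : Ideal S} (hP : Prime P) : 2 ≤ absNorm P := by
  have h0 : absNorm P ≠ 0 := absNorm_eq_zero_iff.not.mpr hP.ne_zero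
  have h1 : absNorm P ≠ 1 := absNorm_eq_one_iff.not.mpr (isUnit_iff.not.mp hP.not_isUnit)
  omega

theorem two_pow_card_normalizedFactors_le_absNorm {J : Ideal S} (hJ : J ≠ ⊥) :
    2 ^ Multiset.card (normalizedFactors J) ≤ absNorm J := by
  calc 2 ^ Multiset.card (normalizedFactors J)
      = 2 ^ Multiset.card ((normalizedFactors J).map absNorm) := by rw [Multiset.card_map]
    _ ≤ ((normalizedFactors J).map absNorm).prod := by
        refine Multiset.pow_card_le_prod fun n hn => ?_
        obtain ⟨P, hP, rfl⟩ := Multiset.mem_map.mp hn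
        exact two_le_absNorm_of_prime (prime_of_normalized_factor P hP)
    _ = absNorm J := by rw [← map_multiset_prod, prod_normalizedFactors_eq_self hJ]

theorem card_dvd_le_absNorm {J : Ideal S} (hJ : J ≠ ⊥) :
    Nat.card {I : Ideal S // I ∣ J} ≤ absNorm J := by
  classical
  let factorsOf (I : {I : Ideal S // I ∣ J}) : (normalizedFactors J).powerset.toFinset :=
    ⟨normalizedFactors I.1, by
      rw [Multiset.mem_toFinset, Multiset.mem_powerset]
      exact (dvd_iff_normalizedFactors_le_normalizedFactors
        (ne_zero_of_dvd_ne_zero hJ I.2) hJ).mp I.2⟩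
  have factorsOf_injective : Function.Injective factorsOf := fun I I' h => by
    have h' : normalizedFactors I.1 = normalizedFactors I'.1 := congrArg Subtype.val h
    rw [Subtype.ext_iff, ← prod_normalizedFactors_eq_self (ne_zero_of_dvd_ne_zero hJ I.2),
      ← prod_normalizedFactors_eq_self (ne_zero_of_dvd_ne_zero hJ I'.2), h']
  calc Nat.card {I : Ideal S // I ∣ J} ≤ (normalizedFactors J).powerset.toFinset.card :=
        (Nat.card_le_card_of_injective factorsOf factorsOf_injective).trans_eq
          (Nat.card_eq_finsetCard _)
    _ ≤ Multiset.card (normalizedFactors J).powerset := Multiset.toFinset_card_le _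
    _ = 2 ^ Multiset.card (normalizedFactors J) := Multiset.card_powerset _
    _ ≤ absNorm J := two_pow_card_normalizedFactors_le_absNorm hJ

theorem card_absNorm_eq_le_pow_finrank [CharZero S] {n : ℕ} (hn : n ≠ 0) :
    Nat.card {I : Ideal S // absNorm I = n} ≤ n ^ Module.finrank ℤ S := by
  have hJ : span {(n : S)} ≠ ⊥ := by simpa [span_singleton_eq_bot] using hn
  have := (fintypeSubtypeDvd _ hJ).finite
  calc Nat.card {I : Ideal S // absNorm I = n}
      ≤ Nat.card {I : Ideal S // I ∣ span {(n : S)}} :=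
        Nat.card_le_card_of_injective _ (Subtype.impEmbedding _ _ fun I hI =>
          dvd_iff_le.mpr (hI ▸ span_singleton_absNorm_le I)).injective
    _ ≤ absNorm (span {(n : S)}) := card_dvd_le_absNorm hJ
    _ = n ^ Module.finrank ℤ S := absNorm_span_natCast n

theorem card_absNorm_le_le_pow_finrank_succ [CharZero S] (M : ℕ) :
    Nat.card {I : (Ideal S)⁰ // absNorm (I : Ideal S) ≤ M} ≤
      M ^ (Module.finrank ℤ S + 1) := by
  have (n : ℕ) : Finite {I : Ideal S // absNorm I = n} :=
    (finite_setOfPred_absNorm_eq n).to_subtype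
  let normAndIdeal (I : {I : (Ideal S)⁰ // absNorm (I : Ideal S) ≤ M}) :
      Σ k : Fin M, {J : Ideal S // absNorm J = k + 1} :=
    ⟨⟨absNorm (I.1 : Ideal S) - 1, by have := absNorm_pos_of_nonZeroDivisors I.1; omega⟩,
      ⟨I.1, by have := absNorm_pos_of_nonZeroDivisors I.1; simp only; omega⟩⟩
  have normAndIdeal_injective : Function.Injective normAndIdeal := fun I I' h =>
    Subtype.ext (Subtype.ext (congrArg (fun x => x.2.1) h))
  calc Nat.card {I : (Ideal S)⁰ // absNorm (I : Ideal S) ≤ M}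
      ≤ Nat.card (Σ k : Fin M, {J : Ideal S // absNorm J = k + 1}) :=
        Nat.card_le_card_of_injective normAndIdeal normAndIdeal_injective
    _ = ∑ k : Fin M, Nat.card {J : Ideal S // absNorm J = k + 1} := Nat.card_sigma
    _ ≤ ∑ _k : Fin M, M ^ Module.finrank ℤ S := Finset.sum_le_sum fun k _ =>
        (card_absNorm_eq_le_pow_finrank k.1.succ_ne_zero).trans (Nat.pow_le_pow_left k.isLt _)
    _ = M ^ (Module.finrank ℤ S + 1) := by simp [pow_succ']

end Ideal

namespace NumberField

open Module InfinitePlace Real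

variable (K : Type*) [Field K] [NumberField K]

theorem minkowskiBound_le_sqrt_abs_discr :
    (4 / π) ^ nrComplexPlaces K *
      ((finrank ℚ K).factorial / (finrank ℚ K : ℝ) ^ finrank ℚ K * √|(discr K : ℝ)|) ≤
      √|(discr K : ℝ)| := by
  have h2s : 2 * nrComplexPlaces K ≤ finrank ℚ K := by
    rw [← card_add_two_mul_card_eq_rank]; exact Nat.le_add_left _ _
  have hd : (0 : ℝ) < (finrank ℚ K : ℝ) ^ finrank ℚ K := by
    have : 0 < finrank ℚ K := finrank_pos
    positivity
  calc (4 / π) ^ nrComplexPlaces K *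
        ((finrank ℚ K).factorial / (finrank ℚ K : ℝ) ^ finrank ℚ K * √|(discr K : ℝ)|)
      = (4 / π) ^ nrComplexPlaces K * (finrank ℚ K).factorial /
          (finrank ℚ K : ℝ) ^ finrank ℚ K * √|(discr K : ℝ)| := by ring
    _ ≤ 1 * √|(discr K : ℝ)| := by
        gcongr
        exact (div_le_one hd).mpr (four_div_pi_pow_mul_factorial_le_pow h2s)
    _ = √|(discr K : ℝ)| := one_mul _

variable {K}

theorem exists_ideal_in_class_of_absNorm_le_sqrt_natAbs_discr (C : ClassGroup (𝓞 K)) :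
    ∃ I : (Ideal (𝓞 K))⁰, ClassGroup.mk0 I = C ∧
      Ideal.absNorm (I : Ideal (𝓞 K)) ≤ Nat.sqrt (discr K).natAbs := by
  obtain ⟨I, hIC, hI⟩ := exists_ideal_in_class_of_norm_le C
  refine ⟨I, hIC, Nat.le_sqrt'.mpr ?_⟩
  have hsq := hI.trans (minkowskiBound_le_sqrt_abs_discr K)
  rw [Real.le_sqrt (Nat.cast_nonneg _) (abs_nonneg _), ← Int.cast_abs, ← Nat.cast_natAbs] at hsq
  exact_mod_cast hsq

end NumberField

/-- Lenstra's bound: the class number of a number field `K` is at most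
`(d_K + D_K)^(d_K)`, where `d_K = [K:ℚ]` and `D_K` is the absolute value of the
discriminant of `K` over `ℚ`. -/
theorem classNumber_le_degree_add_discr_pow (K : Type*) [Field K] [NumberField K] :
    Nat.card (ClassGroup (𝓞 K)) ≤
      (Module.finrank ℚ K + (discr K).natAbs) ^ Module.finrank ℚ K := by
  set d := Module.finrank ℚ K
  set M := Nat.sqrt (discr K).natAbs
  choose I hIC hIM using exists_ideal_in_class_of_absNorm_le_sqrt_natAbs_discr (K := K)
  have : Finite {J : (Ideal (𝓞 K))⁰ // Ideal.absNorm (J : Ideal (𝓞 K)) ≤ M} :=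
    (Ideal.finite_setOfPred_absNorm_le₀ M).to_subtype
  have hI_injective : Function.Injective fun C => (⟨I C, hIM C⟩ :
      {J : (Ideal (𝓞 K))⁰ // Ideal.absNorm (J : Ideal (𝓞 K)) ≤ M}) := fun C C' h => by
    rw [← hIC C, ← hIC C']
    exact congrArg (fun J => ClassGroup.mk0 J.1) h
  have hd : 1 ≤ d := Module.finrank_pos
  have hrank : Module.finrank ℤ (𝓞 K) = d := RingOfIntegers.rank K
  calc Nat.card (ClassGroup (𝓞 K))
      ≤ Nat.card {J : (Ideal (𝓞 K))⁰ // Ideal.absNorm (J : Ideal (𝓞 K)) ≤ M} :=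
        Nat.card_le_card_of_injective _ hI_injective
    _ ≤ M ^ (d + 1) := hrank ▸ Ideal.card_absNorm_le_le_pow_finrank_succ M
    _ ≤ (M ^ 2) ^ d := by
        rw [← pow_mul]
        rcases M.eq_zero_or_pos with hM | hM
        · simp [hM]
        · exact Nat.pow_le_pow_right hM (by omega)
    _ ≤ (discr K).natAbs ^ d := Nat.pow_le_pow_left (Nat.sqrt_le' _) d
    _ ≤ (d + (discr K).natAbs) ^ d := Nat.pow_le_pow_left (Nat.le_add_left _ _) d
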